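/- Let (Ω,T) be a uniquely ergodic dynamical system and A : Ω → SL(2,R) a continuous cocycle satisfying lim_{n→∞} (1/n) sup_{ω,ϱ∈Ω} |log‖A_n(ω)‖ − log‖A_n(ϱ)‖| = 0. Then A is uniform, i.e., (1/n) log‖A_n(ω)‖ converges uniformly in ω to a constant L(A). -/

import Mathlib

/-!
Since `A_{n+m}(ω) = A_n(T^m ω) A_m(ω)` and the operator norm is submultiplicative, the numbers
`b n = sup_ω log ‖A_n(ω)‖` form a subadditive sequence, so `b n / n` converges to some `L` by
Fekete's lemma. The oscillation hypothesis says that `log ‖A_n(ω)‖ / n` lies within `o(1)` of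
`b n / n`, uniformly in `ω`.
-/

open scoped Matrix.Norms.L2Operator
open Filter Topology MeasureTheory

noncomputable abbrev SL2 := Matrix.SpecialLinearGroup (Fin 2) ℝ

noncomputable instance : MetricSpace SL2 :=
  MetricSpace.induced (fun B => (B : Matrix (Fin 2) (Fin 2) ℝ))
    (fun _ _ h => Subtype.ext h) inferInstance

/-- The `n`-step cocycle iterate `A_n(ω) = A(T^{n-1}ω) ⋯ A(ω)`. -/
noncomputable def coc {Ω : Type*} (T : Ω → Ω) (A : Ω → SL2) : ℕ → Ω → SL2
  | 0, _ => 1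
  | n + 1, ω => coc T A n (T ω) * A ω

/-- `log ‖A_n(ω)‖`, using the operator norm on 2×2 real matrices. -/
noncomputable def cocNorm {Ω : Type*} (T : Ω → Ω) (A : Ω → SL2) (n : ℕ) (ω : Ω) : ℝ :=
  Real.log ‖(coc T A n ω : Matrix (Fin 2) (Fin 2) ℝ)‖

/-- Uniform hyperbolicity: `liminf (1/n) log ‖A_n(ω)‖ ≥ L > 0` uniformly in `ω`. -/
def UniformlyHyperbolic {Ω : Type*} (T : Ω → Ω) (A : Ω → SL2) : Prop :=
  ∃ L > (0 : ℝ), ∀ ε > (0 : ℝ), ∃ N : ℕ, ∀ n ≥ N, ∀ ω,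
    L - ε < (1 / n : ℝ) * cocNorm T A n ω

/-- `(1/n) log ‖A_n(ω)‖ → L` uniformly in `ω`. -/
def TendsUniformlyToConst {Ω : Type*} (T : Ω → Ω) (A : Ω → SL2) (L : ℝ) : Prop :=
  ∀ ε > (0 : ℝ), ∃ N : ℕ, ∀ n ≥ N, ∀ ω,
    |(1 / n : ℝ) * cocNorm T A n ω - L| < ε

/-- A uniform cocycle. -/
def IsUniformCocycle {Ω : Type*} (T : Ω → Ω) (A : Ω → SL2) : Prop :=
  ∃ L : ℝ, TendsUniformlyToConst T A L

/-- Uniform behavior: uniformly hyperbolic, or `(1/n) log ‖A_n(ω)‖ → 0` uniformly. -/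
def HasUniformBehavior {Ω : Type*} (T : Ω → Ω) (A : Ω → SL2) : Prop :=
  UniformlyHyperbolic T A ∨ TendsUniformlyToConst T A 0

theorem Matrix.sum_sq_col_le_l2_opNorm_sq {m n : Type*} [Fintype m] [Fintype n] [DecidableEq n]
    (M : Matrix m n ℝ) (j : n) : ∑ i, M i j ^ 2 ≤ ‖M‖ ^ 2 := by
  have h := M.l2_opNorm_mulVec (EuclideanSpace.single j 1)
  rw [PiLp.norm_single, norm_one, mul_one] at h
  simpa [EuclideanSpace.real_norm_sq_eq] using pow_le_pow_left₀ (norm_nonneg _) h 2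

theorem Matrix.abs_det_fin_two_le_l2_opNorm_sq (M : Matrix (Fin 2) (Fin 2) ℝ) :
    |M.det| ≤ ‖M‖ ^ 2 := by
  have h0 := M.sum_sq_col_le_l2_opNorm_sq 0
  have h1 := M.sum_sq_col_le_l2_opNorm_sq 1
  simp only [Fin.sum_univ_two] at h0 h1
  -- Lagrange's identity: `(a² + c²)(b² + d²) = (ad - bc)² + (ab + cd)²`
  have hdet : M.det ^ 2 ≤ (M 0 0 ^ 2 + M 1 0 ^ 2) * (M 0 1 ^ 2 + M 1 1 ^ 2) := by
    rw [Matrix.det_fin_two]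
    nlinarith [sq_nonneg (M 0 0 * M 0 1 + M 1 0 * M 1 1)]
  apply abs_le_of_sq_le_sq _ (by positivity)
  calc M.det ^ 2 ≤ _ := hdet
    _ ≤ ‖M‖ ^ 2 * ‖M‖ ^ 2 := by gcongr
    _ = (‖M‖ ^ 2) ^ 2 := by ring

theorem SL2.one_le_norm (B : SL2) : 1 ≤ ‖(B : Matrix (Fin 2) (Fin 2) ℝ)‖ := by
  have h := (B : Matrix (Fin 2) (Fin 2) ℝ).abs_det_fin_two_le_l2_opNorm_sq
  rw [B.det_coe, abs_one] at h
  exact (one_le_sq_iff₀ (norm_nonneg _)).mp h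

section Cocycle

variable {Ω : Type*} (T : Ω → Ω) (A : Ω → SL2)

theorem coc_add (n m : ℕ) (ω : Ω) :
    coc T A (n + m) ω = coc T A n (T^[m] ω) * coc T A m ω := by
  induction m generalizing ω with
  | zero => simp [coc]
  | succ m ih => rw [← add_assoc, coc, coc, ih, Function.iterate_succ_apply, mul_assoc]

theorem cocNorm_nonneg (n : ℕ) (ω : Ω) : 0 ≤ cocNorm T A n ω :=
  Real.log_nonneg (SL2.one_le_norm _)

theorem cocNorm_add_le (n m : ℕ) (ω : Ω) :
    cocNorm T A (n + m) ω ≤ cocNorm T A n (T^[m] ω) + cocNorm T A m ω := by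
  have hpos : ∀ B : SL2, 0 < ‖(B : Matrix (Fin 2) (Fin 2) ℝ)‖ :=
    fun B => one_pos.trans_le (SL2.one_le_norm B)
  rw [cocNorm, cocNorm, cocNorm, coc_add, ← Real.log_mul (hpos _).ne' (hpos _).ne']
  exact Real.log_le_log (hpos _) (norm_mul_le _ _)

variable {T A} [TopologicalSpace Ω]

theorem continuous_coc (hT : Continuous T)
    (hA : Continuous fun ω => (A ω : Matrix (Fin 2) (Fin 2) ℝ)) (n : ℕ) :
    Continuous fun ω => (coc T A n ω : Matrix (Fin 2) (Fin 2) ℝ) := by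
  induction n with
  | zero => exact continuous_const
  | succ n ih => exact (ih.comp hT).mul hA

theorem continuous_cocNorm (hT : Continuous T)
    (hA : Continuous fun ω => (A ω : Matrix (Fin 2) (Fin 2) ℝ)) (n : ℕ) :
    Continuous (cocNorm T A n) :=
  (continuous_coc hT hA n).norm.log fun _ => (one_pos.trans_le (SL2.one_le_norm _)).ne'

end Cocycle

section Oscillation

variable {X : Type*} {f : ℕ → X → ℝ}

theorem abs_sub_iSup_le {g : X → ℝ} (hg : BddAbove (Set.range g)) {δ : ℝ} (x : X)
    (h : ∀ y, g y - g x ≤ δ) : |g x - ⨆ y, g y| ≤ δ := by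
  have : Nonempty X := ⟨x⟩
  rw [abs_sub_comm, abs_le]
  constructor
  · linarith [le_ciSup hg x, h x]
  · linarith [ciSup_le fun y => show g y ≤ g x + δ by linarith [h y]]

theorem subadditive_iSup_of_le_add {S : X → X} (hf_nonneg : ∀ n x, 0 ≤ f n x)
    (hbdd : ∀ n, BddAbove (Set.range (f n)))
    (hsub : ∀ m n x, f (m + n) x ≤ f m (S^[n] x) + f n x) :
    Subadditive fun n => ⨆ x, f n x := fun m n =>
  Real.iSup_le
    (fun x => (hsub m n x).trans (add_le_add (le_ciSup (hbdd m) _) (le_ciSup (hbdd n) x)))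
    (add_nonneg (Real.iSup_nonneg (hf_nonneg m)) (Real.iSup_nonneg (hf_nonneg n)))

theorem exists_uniform_limit_of_oscillation {S : X → X} (hf_nonneg : ∀ n x, 0 ≤ f n x)
    (hbdd : ∀ n, BddAbove (Set.range (f n)))
    (hsub : ∀ m n x, f (m + n) x ≤ f m (S^[n] x) + f n x)
    (hosc : ∀ ε > (0 : ℝ), ∃ N : ℕ, ∀ n ≥ N, ∀ x y,
      (1 / n : ℝ) * |f n x - f n y| < ε) :
    ∃ L, ∀ ε > (0 : ℝ), ∃ N : ℕ, ∀ n ≥ N, ∀ x,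
      |(1 / n : ℝ) * f n x - L| < ε := by
  have hb := subadditive_iSup_of_le_add hf_nonneg hbdd hsub
  have hlim := hb.tendsto_lim
    ⟨0, Set.forall_mem_range.2 fun n =>
      div_nonneg (Real.iSup_nonneg (hf_nonneg n)) n.cast_nonneg⟩
  refine ⟨hb.lim, fun ε hε => ?_⟩
  obtain ⟨N₁, hN₁⟩ := hosc (ε / 2) (half_pos hε)
  obtain ⟨N₂, hN₂⟩ := Metric.tendsto_atTop.mp hlim (ε / 2) (half_pos hε)
  refine ⟨max N₁ N₂, fun n hn x => ?_⟩
  have hn0 : (0 : ℝ) ≤ 1 / n := by positivity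
  have hclose : |(1 / n : ℝ) * f n x - (⨆ y, f n y) / n| ≤ ε / 2 := by
    rw [← one_div_mul_eq_div (n : ℝ) (⨆ y, f n y), Real.mul_iSup_of_nonneg hn0]
    refine abs_sub_iSup_le ⟨1 / n * ⨆ y, f n y, Set.forall_mem_range.2 fun y =>
      mul_le_mul_of_nonneg_left (le_ciSup (hbdd n) y) hn0⟩ x fun y => ?_
    calc 1 / n * f n y - 1 / n * f n x ≤ 1 / n * |f n y - f n x| := by
          rw [← mul_sub]; exact mul_le_mul_of_nonneg_left (le_abs_self _) hn0
      _ ≤ ε / 2 := (hN₁ n (le_of_max_le_left hn) y x).le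
  calc |(1 / n : ℝ) * f n x - hb.lim|
      ≤ |(1 / n : ℝ) * f n x - (⨆ y, f n y) / n| + |(⨆ y, f n y) / n - hb.lim| :=
        abs_sub_le _ _ _
    _ < ε / 2 + ε / 2 := add_lt_add_of_le_of_lt hclose (hN₂ n (le_of_max_le_right hn))
    _ = ε := add_halves ε

end Oscillation

theorem uniform_of_var_tendsto_zero_general {Ω : Type*} [MetricSpace Ω] [CompactSpace Ω]
    (T : Ω ≃ₜ Ω)
    (A : Ω → SL2) (hA : Continuous (fun ω => (A ω : Matrix (Fin 2) (Fin 2) ℝ)))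
    (hvar : ∀ ε > (0 : ℝ), ∃ N : ℕ, ∀ n ≥ N, ∀ ω ϱ : Ω,
      (1 / n : ℝ) * |cocNorm (⇑T) A n ω - cocNorm (⇑T) A n ϱ| < ε) :
    IsUniformCocycle (⇑T) A :=
  exists_uniform_limit_of_oscillation (cocNorm_nonneg T A)
    (fun n => (isCompact_range (continuous_cocNorm T.continuous hA n)).bddAbove)
    (cocNorm_add_le T A) hvar

/-- For a uniquely ergodic system, a continuous cocycle `A` with
`(1/n) sup_{ω,ϱ} |log‖A_n(ω)‖ - log‖A_n(ϱ)‖| → 0` is uniform. -/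
theorem uniform_of_var_tendsto_zero {Ω : Type*} [MetricSpace Ω] [CompactSpace Ω]
    [MeasurableSpace Ω] [BorelSpace Ω] (T : Ω ≃ₜ Ω)
    (hex : ∃ μ : Measure Ω, IsProbabilityMeasure μ ∧ MeasurePreserving (⇑T) μ μ)
    (huniq : ∀ μ ν : Measure Ω, IsProbabilityMeasure μ → IsProbabilityMeasure ν →
      MeasurePreserving (⇑T) μ μ → MeasurePreserving (⇑T) ν ν → μ = ν)
    (A : Ω → SL2) (hA : Continuous (fun ω => (A ω : Matrix (Fin 2) (Fin 2) ℝ)))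
    (hvar : ∀ ε > (0 : ℝ), ∃ N : ℕ, ∀ n ≥ N, ∀ ω ϱ : Ω,
      (1 / n : ℝ) * |cocNorm (⇑T) A n ω - cocNorm (⇑T) A n ϱ| < ε) :
    IsUniformCocycle (⇑T) A :=
  uniform_of_var_tendsto_zero_general T A hA hvar
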